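/- arXiv:1804.03911 — 5 statements merged into one kernel-verified Lean document; each statement's English description precedes it below -/
import Mathlib

section
/- Let (E^X_t)_{t∈ℤ} and (E^Y_t)_{t∈ℤ} be jointly independent families of i.i.d. real standard Gaussian random variables, let α, β, γ be real with |α| < 1, |γ| < 1, α ≠ γ, and let Y_{t+1} := Σ_{k=0}^∞ γ^k E^Y_{t−k} + β Σ_{k=0}^∞ ((α^{k+1} − γ^{k+1})/(α − γ)) E^X_{t−1−k} (convergence in L²). Then 𝕍[Y_{t+1}] = 1/(1−γ²) + β²(1 + αγ)/((1−α²)(1−αγ)(1−γ²)). -/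
/-!
The truncations of the series are finite linear combinations of distinct, hence independent,
standard Gaussians, so their variances are sums of squared coefficients. Expanding the square of
`(α ^ (k + 1) - γ ^ (k + 1)) / (α - γ)` reduces these to geometric series in `γ ^ 2`, `α ^ 2` and
`α * γ`, and variance is continuous for convergence in `L²`.
-/

open MeasureTheory ProbabilityTheory Filter Function
open scoped Topology

section

variable {Ω : Type*} {mΩ : MeasurableSpace Ω} {μ : Measure Ω}

lemma variance_sum_const_mul_of_iIndepFun {ι κ : Type*} {Z : ι → Ω → ℝ} (hZ : iIndepFun Z μ)
    (hmem : ∀ i, MemLp (Z i) 2 μ) {f : κ → ι} (hf : Injective f) (c : κ → ℝ) (s : Finset κ) :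
    Var[fun ω ↦ ∑ j ∈ s, c j * Z (f j) ω; μ] = ∑ j ∈ s, c j ^ 2 * Var[Z (f j); μ] := by
  have h := IndepFun.variance_sum (X := fun j ω ↦ c j * Z (f j) ω) (s := s)
    (fun j _ ↦ (hmem _).const_mul _)
    (fun i _ j _ hij ↦ (hZ.indepFun (hf.ne hij)).comp (measurable_const_mul _)
      (measurable_const_mul _))
  simpa [Finset.sum_fn, variance_const_mul] using h

lemma memLp_of_tendsto_eLpNorm_sub {ι E : Type*} [NormedAddCommGroup E] {l : Filter ι} [l.NeBot]
    {p : ENNReal} {X : ι → Ω → E} {Y : Ω → E} (hX : ∀ n, MemLp (X n) p μ)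
    (hY : AEStronglyMeasurable Y μ) (h : Tendsto (fun n ↦ eLpNorm (Y - X n) p μ) l (𝓝 0)) :
    MemLp Y p μ := by
  obtain ⟨n, hn⟩ := (h.eventually_lt_const zero_lt_one).exists
  simpa using (MemLp.add ⟨hY.sub (hX n).1, hn.trans ENNReal.one_lt_top⟩ (hX n))

-- The mean is the inner product with the constant `1`, which makes the variance visibly
-- continuous on `L²`.
lemma variance_eq_inner_toLp [IsProbabilityMeasure μ] {X : Ω → ℝ} (hX : MemLp X 2 μ) :
    Var[X; μ] = inner ℝ (hX.toLp X) (hX.toLp X)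
      - inner ℝ (indicatorConstLp 2 MeasurableSet.univ (measure_ne_top μ _) (1 : ℝ))
          (hX.toLp X) ^ 2 := by
  rw [variance_eq_sub hX, L2.inner_indicatorConstLp_one, setIntegral_univ, L2.inner_def,
    integral_congr_ae hX.coeFn_toLp]
  congr 1
  refine integral_congr_ae ?_
  filter_upwards [hX.coeFn_toLp] with ω hω
  simp [hω, sq]

lemma tendsto_variance_of_tendsto_eLpNorm_sub [IsProbabilityMeasure μ] {ι : Type*}
    {l : Filter ι} [l.NeBot] {X : ι → Ω → ℝ} {Y : Ω → ℝ} (hX : ∀ n, MemLp (X n) 2 μ)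
    (hY : AEStronglyMeasurable Y μ) (h : Tendsto (fun n ↦ eLpNorm (Y - X n) 2 μ) l (𝓝 0)) :
    Tendsto (fun n ↦ Var[X n; μ]) l (𝓝 Var[Y; μ]) := by
  have hYmem := memLp_of_tendsto_eLpNorm_sub hX hY h
  have hL2 : Tendsto (fun n ↦ (hX n).toLp (X n)) l (𝓝 (hYmem.toLp Y)) := by
    rw [Lp.tendsto_Lp_iff_tendsto_eLpNorm'']
    simpa [eLpNorm_sub_comm] using h
  simp only [variance_eq_inner_toLp (hX _), variance_eq_inner_toLp hYmem]
  exact (hL2.inner hL2).sub ((tendsto_const_nhds.inner hL2).pow 2)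

end

lemma hasSum_sq_pow {γ : ℝ} (hγ : |γ| < 1) : HasSum (fun k : ℕ ↦ (γ ^ k) ^ 2) (1 - γ ^ 2)⁻¹ := by
  have hγ2 : |γ ^ 2| < 1 := by rwa [abs_pow, sq_lt_one_iff_abs_lt_one, abs_abs]
  simpa [← pow_mul, mul_comm] using hasSum_geometric_of_abs_lt_one hγ2

lemma hasSum_sq_div_sub {α γ : ℝ} (hα : |α| < 1) (hγ : |γ| < 1) (hαγ : α ≠ γ) :
    HasSum (fun k : ℕ ↦ ((α ^ (k + 1) - γ ^ (k + 1)) / (α - γ)) ^ 2)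
      ((1 + α * γ) / ((1 - α ^ 2) * (1 - α * γ) * (1 - γ ^ 2))) := by
  have hαγ1 : |α * γ| < 1 := by rw [abs_mul]; nlinarith [abs_nonneg α, abs_nonneg γ]
  have hsum := (((hasSum_sq_pow hα).mul_left (α ^ 2)).add
    ((hasSum_sq_pow hγ).mul_left (γ ^ 2))).sub
    ((hasSum_geometric_of_abs_lt_one hαγ1).mul_left (2 * α * γ)) |>.div_const ((α - γ) ^ 2)
  have hsub : α - γ ≠ 0 := sub_ne_zero.mpr hαγ
  have hα2 : 1 - α ^ 2 ≠ 0 := sub_ne_zero.mpr ((sq_lt_one_iff_abs_lt_one α).mpr hα).ne'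
  have hγ2 : 1 - γ ^ 2 ≠ 0 := sub_ne_zero.mpr ((sq_lt_one_iff_abs_lt_one γ).mpr hγ).ne'
  have hαγ2 : 1 - α * γ ≠ 0 := sub_ne_zero.mpr (abs_lt.mp hαγ1).2.ne'
  have hval : (α ^ 2 * (1 - α ^ 2)⁻¹ + γ ^ 2 * (1 - γ ^ 2)⁻¹ - 2 * α * γ * (1 - α * γ)⁻¹)
      / (α - γ) ^ 2 = (1 + α * γ) / ((1 - α ^ 2) * (1 - α * γ) * (1 - γ ^ 2)) := by
    field_simp
    ring
  rw [hval] at hsum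
  exact hsum.congr_fun fun k ↦ by rw [div_pow]; ring

/-- For jointly independent i.i.d. standard Gaussian families
`(EX t)` and `(EY t)`, `|α| < 1`, `|γ| < 1`, `α ≠ γ`, the stationary solution
`Y (t+1) = ∑_{k ≥ 0} γ ^ k * EY (t - k)
  + β * ∑_{k ≥ 0} ((α^(k+1) - γ^(k+1)) / (α - γ)) * EX (t - 1 - k)`
(series converging in `L²`) has variance
`𝕍[Y (t+1)] = 1/(1-γ²) + β² (1 + αγ) / ((1-α²)(1-αγ)(1-γ²))`. -/
theorem stmt_2 {Ω : Type*} [MeasureSpace Ω] [IsProbabilityMeasure (ℙ : Measure Ω)]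
    (EX EY : ℤ → Ω → ℝ)
    (hEXmeas : ∀ t, Measurable (EX t)) (hEYmeas : ∀ t, Measurable (EY t))
    (hindep : iIndepFun (Sum.elim EX EY) ℙ)
    (hEXdist : ∀ t, Measure.map (EX t) ℙ = gaussianReal 0 1)
    (hEYdist : ∀ t, Measure.map (EY t) ℙ = gaussianReal 0 1)
    (α β γ : ℝ) (hα : |α| < 1) (hγ : |γ| < 1) (hαγ : α ≠ γ)
    (Y : ℤ → Ω → ℝ) (hYmeas : ∀ t, Measurable (Y t))
    (hY : ∀ t : ℤ, Tendsto (fun n : ℕ =>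
        eLpNorm (fun ω => Y (t + 1) ω -
          (∑ k ∈ Finset.range n, γ ^ k * EY (t - k) ω
            + β * ∑ k ∈ Finset.range n,
                ((α ^ (k + 1) - γ ^ (k + 1)) / (α - γ)) * EX (t - 1 - k) ω)) 2 ℙ)
      atTop (nhds 0)) :
    ∀ t : ℤ, variance (Y (t + 1)) ℙ =
      1 / (1 - γ ^ 2) + β ^ 2 * (1 + α * γ) / ((1 - α ^ 2) * (1 - α * γ) * (1 - γ ^ 2)) := by
  intro t
  have hlaw : ∀ i, HasLaw (Sum.elim EX EY i) (gaussianReal 0 1) ℙ := by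
    rintro (s | s)
    exacts [⟨(hEXmeas s).aemeasurable, hEXdist s⟩, ⟨(hEYmeas s).aemeasurable, hEYdist s⟩]
  have hmem i : MemLp (Sum.elim EX EY i) 2 ℙ := (hlaw i).hasGaussianLaw.memLp_two
  have hvar i : Var[Sum.elim EX EY i; ℙ] = 1 := (hlaw i).variance_eq.trans variance_id_gaussianReal
  let f : ℕ ⊕ ℕ → ℤ ⊕ ℤ := Sum.map (fun k ↦ t - 1 - k) (fun k ↦ t - k)
  have hf : Injective f :=
    Injective.sumMap (fun k l h ↦ by simpa using h) (fun k l h ↦ by simpa using h)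
  let c : ℕ ⊕ ℕ → ℝ :=
    Sum.elim (fun k ↦ β * ((α ^ (k + 1) - γ ^ (k + 1)) / (α - γ))) (fun k ↦ γ ^ k)
  have hS (n : ℕ) (ω : Ω) : ∑ k ∈ Finset.range n, γ ^ k * EY (t - k) ω
      + β * ∑ k ∈ Finset.range n, ((α ^ (k + 1) - γ ^ (k + 1)) / (α - γ)) * EX (t - 1 - k) ω
      = ∑ j ∈ (Finset.range n).disjSum (Finset.range n), c j * Sum.elim EX EY (f j) ω := by
    simp [f, c, Finset.sum_disjSum, Finset.mul_sum, mul_assoc, add_comm]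
  have hconv := hY t
  simp only [hS] at hconv
  refine tendsto_nhds_unique (tendsto_variance_of_tendsto_eLpNorm_sub
    (fun n ↦ memLp_finsetSum _ fun j _ ↦ (hmem _).const_mul _)
    (hYmeas _).aestronglyMeasurable hconv) ?_
  have hvarS (n : ℕ) : Var[fun ω ↦ ∑ j ∈ (Finset.range n).disjSum (Finset.range n),
      c j * Sum.elim EX EY (f j) ω; ℙ]
      = ∑ k ∈ Finset.range n, (γ ^ k) ^ 2
        + ∑ k ∈ Finset.range n, β ^ 2 * ((α ^ (k + 1) - γ ^ (k + 1)) / (α - γ)) ^ 2 := by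
    rw [variance_sum_const_mul_of_iIndepFun hindep hmem hf]
    simp [hvar, Finset.sum_disjSum, c, mul_pow, add_comm]
  simp only [hvarS, one_div, mul_div_assoc]
  exact (hasSum_sq_pow hγ).tendsto_sum_nat.add
    ((hasSum_sq_div_sub hα hγ hαγ).mul_left (β ^ 2)).tendsto_sum_nat
end

section
/- Let α, β, γ be real numbers with 0 < α < 1, 0 < γ < 1 and β ≠ 0. Then the observational regression coefficient a := αβ/(1−αγ) is not equal to the interventional coefficient a' := β/(1−γ). -/
/-- For `0 < α < 1`, `0 < γ < 1` and `β ≠ 0`, the observational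
regression coefficient `a = α β / (1 - α γ)` differs from the interventional
coefficient `a' = β / (1 - γ)`. -/
theorem stmt_5 (α β γ : ℝ) (hα0 : 0 < α) (hα1 : α < 1) (hγ0 : 0 < γ) (hγ1 : γ < 1)
    (hβ : β ≠ 0) : α * β / (1 - α * γ) ≠ β / (1 - γ) := by
  have h1 : 1 - α * γ ≠ 0 := by nlinarith
  have h2 : 1 - γ ≠ 0 := by nlinarith
  intro h
  rw [div_eq_div_iff h1 h2] at h
  have : β * ((1 - γ) * (α - 1)) = 0 := by ring_nf; nlinarith [h]
  rcases mul_eq_zero.mp this with h' | h'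
  · exact hβ h'
  · rcases mul_eq_zero.mp h' with h'' | h'' <;> nlinarith
end

section
/- Let β, γ be real numbers with 0 < |β| < 1 and let S be the shift operator (Sf)(t) = f(t+1) on l¹(ℤ, ℂ). For ν ∈ ℝ and T ∈ ℕ let g_{ν,T}(t) = e^{2πiνt}/√(2T+1) for −T ≤ t ≤ T and 0 otherwise, and set z_ν := e^{2πiν} and f_{ν,T} := γ S (I − βS)^{−1} g_{ν,T}. Then ‖f_{ν,T} − γ z_ν (1 − β z_ν)^{−1} g_{ν,T}‖₁ ≤ (2/√(2T+1)) · (|γ|/|β|) · (1 − |β|)^{−2}. -/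
/-!
The defect `f_{ν,T} - γ z (1 - βz)⁻¹ g` is `γ ∑_j β^j (S^{j+1} g - z^{j+1} g)`, and `g = g_{ν,T}` is an
approximate eigenvector of the shift: `S^k g - z^k g` vanishes except at the `2k` points near the
edges of the window where exactly one of `t`, `t + k` lies in `[-T, T]`, and is bounded by
`1/√(2T+1)` there. Exchanging the two sums in `l¹`, the error is at most
`|γ| ∑_j 2(j+1)|β|^j / √(2T+1) = 2|γ| / (√(2T+1) (1 - |β|)²)`.
-/

/-- The normalized complex wave `g_{ν,T}` of frequency `ν` on the window `[-T, T]`: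
`g_{ν,T} t = e^{2πiνt} / √(2T+1)` for `-T ≤ t ≤ T` and `0` otherwise. -/
noncomputable def waveWindow (ν : ℝ) (T : ℕ) : ℤ → ℂ :=
  fun t => if -(T : ℤ) ≤ t ∧ t ≤ (T : ℤ)
    then Complex.exp (2 * Real.pi * Complex.I * (ν : ℂ) * (t : ℂ)) / (Real.sqrt (2 * T + 1) : ℂ)
    else 0

/-- The von Neumann inverse `(I - βS)⁻¹ = ∑_{j ≥ 0} (βS)^j` applied to a complex
sequence `g`, where `S` is the shift `(S g) t = g (t + 1)`. -/
noncomputable def vonNeumannInvC (β : ℝ) (g : ℤ → ℂ) : ℤ → ℂ :=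
  fun t => ∑' j : ℕ, (β : ℂ) ^ j * g (t + j)

open Complex

theorem tsum_norm_tsum_le {ι κ E : Type*} [SeminormedAddCommGroup E] (F : ι → κ → E)
    {c : ι → ℝ} (hF : ∀ j, Summable fun t => ‖F j t‖) (hFc : ∀ j, ∑' t, ‖F j t‖ ≤ c j)
    (hc : Summable c) :
    ∑' t, ‖∑' j, F j t‖ ≤ ∑' j, c j := by
  have hrows : Summable fun j => ∑' t, ‖F j t‖ :=
    hc.of_nonneg_of_le (fun j => tsum_nonneg fun t => norm_nonneg _) hFc
  have hprod : Summable fun p : ι × κ => ‖F p.1 p.2‖ :=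
    (summable_prod_of_nonneg fun p => norm_nonneg _).mpr ⟨hF, hrows⟩
  have hcol : ∀ t, Summable fun j => ‖F j t‖ := hprod.prod_symm.prod_factor
  have hcols : Summable fun t => ∑' j, ‖F j t‖ := hprod.prod_symm.prod
  have hpt : ∀ t, ‖∑' j, F j t‖ ≤ ∑' j, ‖F j t‖ := fun t => norm_tsum_le_tsum_norm (hcol t)
  calc ∑' t, ‖∑' j, F j t‖
      ≤ ∑' t, ∑' j, ‖F j t‖ :=
        (hcols.of_nonneg_of_le (fun t => norm_nonneg _) hpt).tsum_le_tsum hpt hcols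
    _ = ∑' j, ∑' t, ‖F j t‖ := hprod.tsum_comm
    _ ≤ ∑' j, c j := hrows.tsum_le_tsum hFc hc

theorem tsum_norm_le_card_mul {ι E : Type*} [SeminormedAddCommGroup E] {f : ι → E}
    (s : Finset ι) (hs : ∀ t ∉ s, f t = 0) {a : ℝ} (ha : ∀ t, ‖f t‖ ≤ a) :
    ∑' t, ‖f t‖ ≤ s.card * a := by
  rw [tsum_eq_sum fun t ht => by rw [hs t ht, norm_zero], ← nsmul_eq_mul]
  exact Finset.sum_le_card_nsmul _ _ _ fun t _ => ha t

theorem hasSum_add_one_mul_geometric {r : ℝ} (hr0 : 0 ≤ r) (hr1 : r < 1) :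
    HasSum (fun n : ℕ => ((n : ℝ) + 1) * r ^ n) ((1 - r) ^ 2)⁻¹ := by
  have hr : ‖r‖ < 1 := by rwa [Real.norm_of_nonneg hr0]
  have h := (hasSum_coe_mul_geometric_of_norm_lt_one hr).add (hasSum_geometric_of_lt_one hr0 hr1)
  have hsum : r / (1 - r) ^ 2 + (1 - r)⁻¹ = ((1 - r) ^ 2)⁻¹ := by
    have : 1 - r ≠ 0 := by linarith
    field_simp
    ring
  have hterm : (fun n : ℕ => ((n : ℝ) + 1) * r ^ n) = fun n : ℕ => (n : ℝ) * r ^ n + r ^ n := by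
    ext n
    ring
  rw [hterm, ← hsum]
  exact h

section waveWindow

variable {ν : ℝ} {T : ℕ}

theorem norm_waveWindow_le (t : ℤ) : ‖waveWindow ν T t‖ ≤ (Real.sqrt (2 * T + 1))⁻¹ := by
  unfold waveWindow
  split_ifs
  · simp [norm_exp, abs_of_nonneg (Real.sqrt_nonneg _)]
  · simp

theorem waveWindow_add_of_mem {t : ℤ} {k : ℕ} (ht : -(T : ℤ) ≤ t ∧ t ≤ T)
    (htk : -(T : ℤ) ≤ t + k ∧ t + k ≤ T) :
    waveWindow ν T (t + k) = exp (2 * Real.pi * I * ν) ^ k * waveWindow ν T t := by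
  unfold waveWindow
  rw [if_pos htk, if_pos ht, ← exp_nat_mul, mul_div_assoc', ← exp_add]
  congr 2
  push_cast
  ring

theorem waveWindow_add_sub_eq_zero {t : ℤ} {k : ℕ}
    (h : (-(T : ℤ) ≤ t ∧ t ≤ T) ↔ (-(T : ℤ) ≤ t + k ∧ t + k ≤ T)) :
    waveWindow ν T (t + k) - exp (2 * Real.pi * I * ν) ^ k * waveWindow ν T t = 0 := by
  by_cases ht : -(T : ℤ) ≤ t ∧ t ≤ T
  · rw [waveWindow_add_of_mem ht (h.mp ht), sub_self]
  · simp [waveWindow, ht, h.not.mp ht]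

theorem norm_waveWindow_add_sub_le (t : ℤ) (k : ℕ) :
    ‖waveWindow ν T (t + k) - exp (2 * Real.pi * I * ν) ^ k * waveWindow ν T t‖
      ≤ (Real.sqrt (2 * T + 1))⁻¹ := by
  by_cases h : (-(T : ℤ) ≤ t ∧ t ≤ T) ↔ (-(T : ℤ) ≤ t + k ∧ t + k ≤ T)
  · rw [waveWindow_add_sub_eq_zero h, norm_zero]
    positivity
  by_cases ht : -(T : ℤ) ≤ t ∧ t ≤ T
  · have htk : ¬(-(T : ℤ) ≤ t + k ∧ t + k ≤ T) := fun htk => h (iff_of_true ht htk)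
    have hz : ‖exp (2 * Real.pi * I * ν)‖ = 1 := by simp [norm_exp]
    rw [show waveWindow ν T (t + k) = 0 from if_neg htk, zero_sub, norm_neg, norm_mul, norm_pow,
      hz, one_pow, one_mul]
    exact norm_waveWindow_le t
  · rw [show waveWindow ν T t = 0 from if_neg ht, mul_zero, sub_zero]
    exact norm_waveWindow_le _

theorem waveWindow_add_sub_eq_zero_of_notMem {t : ℤ} {k : ℕ}
    (hs : t ∉ Finset.Ioc ((T : ℤ) - k) T ∪ Finset.Ico (-(T : ℤ) - k) (-T)) :
    waveWindow ν T (t + k) - exp (2 * Real.pi * I * ν) ^ k * waveWindow ν T t = 0 := by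
  simp only [Finset.mem_union, Finset.mem_Ioc, Finset.mem_Ico] at hs
  exact waveWindow_add_sub_eq_zero (by omega)

theorem summable_norm_waveWindow_add_sub (k : ℕ) :
    Summable fun t =>
      ‖waveWindow ν T (t + k) - exp (2 * Real.pi * I * ν) ^ k * waveWindow ν T t‖ :=
  summable_of_ne_finset_zero fun _ hs => by
    rw [waveWindow_add_sub_eq_zero_of_notMem hs, norm_zero]

theorem tsum_norm_waveWindow_add_sub_le (k : ℕ) :
    ∑' t, ‖waveWindow ν T (t + k) - exp (2 * Real.pi * I * ν) ^ k * waveWindow ν T t‖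
      ≤ 2 * k * (Real.sqrt (2 * T + 1))⁻¹ := by
  refine (tsum_norm_le_card_mul _ (fun _ hs => waveWindow_add_sub_eq_zero_of_notMem hs)
    (norm_waveWindow_add_sub_le · k)).trans ?_
  gcongr
  refine (Nat.cast_le.mpr (Finset.card_union_le _ _)).trans ?_
  rw [Int.card_Ioc, Int.card_Ico, sub_sub_cancel, sub_sub_cancel, Int.toNat_natCast]
  push_cast
  linarith

end waveWindow

theorem vonNeumannInvC_add_one_sub_eq_tsum {β : ℝ} (hβ : |β| < 1) {z : ℂ} (hz : ‖z‖ ≤ 1)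
    {g : ℤ → ℂ} {C : ℝ} (hg : ∀ t, ‖g t‖ ≤ C) (t : ℤ) :
    vonNeumannInvC β g (t + 1) - z * (1 - β * z)⁻¹ * g t
      = ∑' j : ℕ, (β : ℂ) ^ j * (g (t + 1 + j) - z ^ (j + 1) * g t) := by
  have hβz : ‖(β : ℂ) * z‖ < 1 := by
    rw [norm_mul, norm_real, Real.norm_eq_abs]
    nlinarith [abs_nonneg β, norm_nonneg z]
  have hshifted : Summable fun j : ℕ => (β : ℂ) ^ j * g (t + 1 + j) := by
    refine ((summable_geometric_of_lt_one (abs_nonneg β) hβ).mul_right C).of_norm_bounded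
      fun j => ?_
    rw [norm_mul, norm_pow, norm_real, Real.norm_eq_abs]
    exact mul_le_mul_of_nonneg_left (hg _) (by positivity)
  have hgeom : HasSum (fun j : ℕ => (β : ℂ) ^ j * (z ^ (j + 1) * g t))
      (z * (1 - β * z)⁻¹ * g t) := by
    have hterm : (fun j : ℕ => (β : ℂ) ^ j * (z ^ (j + 1) * g t))
        = fun j : ℕ => ((β : ℂ) * z) ^ j * (z * g t) := by
      ext j
      ring
    rw [hterm, show z * (1 - β * z)⁻¹ * g t = (1 - β * z)⁻¹ * (z * g t) by ring]
    exact (hasSum_geometric_of_norm_lt_one hβz).mul_right (z * g t)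
  simp_rw [mul_sub]
  exact (hshifted.hasSum.sub hgeom).tsum_eq.symm

theorem tsum_norm_tsum_waveWindow_defect_le {β : ℝ} (hβ : |β| < 1) (ν : ℝ) (T : ℕ) :
    ∑' t, ‖∑' j : ℕ, (β : ℂ) ^ j * (waveWindow ν T (t + 1 + j)
        - exp (2 * Real.pi * I * ν) ^ (j + 1) * waveWindow ν T t)‖
      ≤ 2 * (Real.sqrt (2 * T + 1))⁻¹ * ((1 - |β|) ^ 2)⁻¹ := by
  set a := (Real.sqrt (2 * T + 1))⁻¹
  have hshift : ∀ (t : ℤ) (j : ℕ), t + 1 + (j : ℤ) = t + ((j + 1 : ℕ) : ℤ) := by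
    intro t j
    push_cast
    ring
  simp_rw [hshift]
  have hgeom := hasSum_add_one_mul_geometric (abs_nonneg β) hβ
  refine (tsum_norm_tsum_le _ (c := fun j : ℕ => 2 * a * (((j : ℝ) + 1) * |β| ^ j))
    (fun j => ?_) (fun j => ?_) (hgeom.summable.mul_left _)).trans_eq ?_
  · simp_rw [norm_mul]
    exact (summable_norm_waveWindow_add_sub (j + 1)).mul_left _
  · simp_rw [norm_mul, norm_pow, norm_real, Real.norm_eq_abs]
    rw [tsum_mul_left]
    calc |β| ^ j * ∑' t, ‖waveWindow ν T (t + ((j + 1 : ℕ) : ℤ))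
            - exp (2 * Real.pi * I * ν) ^ (j + 1) * waveWindow ν T t‖
        ≤ |β| ^ j * (2 * ((j + 1 : ℕ) : ℝ) * a) := by
          gcongr
          exact tsum_norm_waveWindow_add_sub_le (j + 1)
      _ = 2 * a * (((j : ℝ) + 1) * |β| ^ j) := by
          push_cast
          ring
  · rw [tsum_mul_left, hgeom.tsum_eq]

/-- For `0 < |β| < 1` and `f_{ν,T} = γ S (I - βS)⁻¹ g_{ν,T}`,
with `z_ν = e^{2πiν}`,
`‖f_{ν,T} - γ z_ν (1 - β z_ν)⁻¹ g_{ν,T}‖₁ ≤ (2/√(2T+1)) ⬝ (|γ|/|β|) ⬝ (1 - |β|)⁻²`. -/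
theorem stmt_14 (β γ : ℝ) (hβ0 : 0 < |β|) (hβ1 : |β| < 1) (ν : ℝ) (T : ℕ) :
    ∑' t : ℤ, ‖(γ : ℂ) * vonNeumannInvC β (waveWindow ν T) (t + 1)
        - (γ : ℂ) * Complex.exp (2 * Real.pi * Complex.I * (ν : ℂ))
            * (1 - (β : ℂ) * Complex.exp (2 * Real.pi * Complex.I * (ν : ℂ)))⁻¹
            * waveWindow ν T t‖
      ≤ 2 / Real.sqrt (2 * T + 1) * (|γ| / |β|) * ((1 - |β|) ^ 2)⁻¹ := by
  have hz : ‖exp (2 * Real.pi * I * ν)‖ ≤ 1 := by simp [norm_exp]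
  have hdefect (t : ℤ) :=
    vonNeumannInvC_add_one_sub_eq_tsum hβ1 hz (norm_waveWindow_le (ν := ν) (T := T)) t
  calc _ = |γ| * ∑' t, ‖∑' j : ℕ, (β : ℂ) ^ j * (waveWindow ν T (t + 1 + j)
          - exp (2 * Real.pi * I * ν) ^ (j + 1) * waveWindow ν T t)‖ := by
        simp_rw [mul_assoc (γ : ℂ), ← mul_sub, hdefect, norm_mul, norm_real, Real.norm_eq_abs]
        exact tsum_mul_left
    _ ≤ |γ| * (2 * (Real.sqrt (2 * T + 1))⁻¹ * ((1 - |β|) ^ 2)⁻¹) := by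
        gcongr
        exact tsum_norm_tsum_waveWindow_defect_le hβ1 ν T
    _ = 2 / Real.sqrt (2 * T + 1) * |γ| * ((1 - |β|) ^ 2)⁻¹ := by ring
    _ ≤ 2 / Real.sqrt (2 * T + 1) * (|γ| / |β|) * ((1 - |β|) ^ 2)⁻¹ := by
        gcongr
        exact le_div_self (abs_nonneg γ) hβ0 hβ1.le
end

section
/- Let β be a real number with |β| < 1, let S be the shift operator on l²(ℤ, ℂ), and for ν ∈ ℝ, T ∈ ℕ let g_{ν,T}(t) = e^{2πiνt}/√(2T+1) for −T ≤ t ≤ T and 0 otherwise, and z_ν := e^{2πiν}. Then lim_{T→∞} ⟨(I − βS)^{−1} g_{ν,T}, (I − βS)^{−1} g_{ν,T}⟩ = |1 − β z_ν|^{−2}, where ⟨·,·⟩ is the complex l² inner product (anti-linear in the first argument). -/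
/-! Put `w = β e^{2πiν}`, so `‖w‖ = |β| < 1`. At `t = T - n` the sequence `(I - βS)⁻¹ g_{ν,T}`
is, up to a unimodular factor and the normalization `(2T+1)^{-1/2}`, the geometric sum of `w ^ j`
over `j ∈ [n - 2T, n] ∩ ℕ`, and it vanishes for `t > T`. For `n ≤ 2T` these are the partial sums
of `∑ w ^ j = (1 - w)⁻¹`, whose squared norms have Cesàro mean tending to `|1 - w|⁻²`; for
`n > 2T` they decay geometrically and contribute `O(1 / T)` in total. -/

open Filter

open Finset Topology Complex

lemma hasSum_int_of_hasSum_nat_sub {M : Type*} [AddCommMonoid M] [TopologicalSpace M]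
    {F : ℤ → M} {a : ℤ} {s : M} (hF : ∀ t, a < t → F t = 0)
    (h : HasSum (fun n : ℕ => F (a - n)) s) : HasSum F s := by
  refine ((Function.Injective.hasSum_iff (g := fun n : ℕ => a - n) (fun m n hmn => ?_)
    fun t ht => hF t ?_)).mp h
  · simpa using hmn
  · by_contra! hle
    exact ht ⟨(a - t).toNat, by simp only; omega⟩

lemma norm_exp_two_pi_I_mul (x : ℝ) : ‖exp (2 * Real.pi * I * x)‖ = 1 := by
  rw [show 2 * Real.pi * I * x = ((2 * Real.pi * x : ℝ) : ℂ) * I by push_cast; ring]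
  exact norm_exp_ofReal_mul_I _

lemma norm_ofReal_mul_exp_two_pi_I_mul (β ν : ℝ) : ‖(β : ℂ) * exp (2 * Real.pi * I * ν)‖ = |β| := by
  rw [norm_mul, norm_exp_two_pi_I_mul, mul_one, norm_real, Real.norm_eq_abs]

/-- The subtraction `n - m` truncates: for `n ≤ m` the window is `[0, n]`. -/
noncomputable def geomWindowSum (w : ℂ) (m n : ℕ) : ℂ :=
  ∑ j ∈ Ico (n - m) (n + 1), w ^ j

lemma geomWindowSum_of_le {w : ℂ} {m n : ℕ} (h : n ≤ m) :
    geomWindowSum w m n = ∑ j ∈ range (n + 1), w ^ j := by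
  rw [geomWindowSum, Nat.sub_eq_zero_of_le h, range_eq_Ico]

lemma geomWindowSum_add {w : ℂ} (m k : ℕ) :
    geomWindowSum w m (k + (m + 1)) = w ^ (k + 1) * ∑ j ∈ range (m + 1), w ^ j := by
  rw [geomWindowSum, sum_Ico_eq_sum_range, mul_sum]
  refine sum_congr (by congr 1; omega) fun j _ => ?_
  rw [← pow_add]
  congr 1
  omega

lemma hasSum_norm_sq_geomWindowSum {w : ℂ} (hw : ‖w‖ < 1) (m : ℕ) :
    HasSum (fun n => ‖geomWindowSum w m n‖ ^ 2)
      (∑ n ∈ range (m + 1), ‖∑ j ∈ range (n + 1), w ^ j‖ ^ 2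
        + ‖w‖ ^ 2 / (1 - ‖w‖ ^ 2) * ‖∑ j ∈ range (m + 1), w ^ j‖ ^ 2) := by
  have hw2 : ‖w‖ ^ 2 < 1 := by nlinarith [norm_nonneg w]
  set C := ‖w‖ ^ 2 * ‖∑ j ∈ range (m + 1), w ^ j‖ ^ 2 with hC
  have hterm : (fun k => ‖geomWindowSum w m (k + (m + 1))‖ ^ 2) = fun k => C * (‖w‖ ^ 2) ^ k := by
    ext k
    rw [geomWindowSum_add, norm_mul, norm_pow, mul_pow, ← pow_mul, ← pow_mul]
    ring
  have htail : HasSum (fun k => ‖geomWindowSum w m (k + (m + 1))‖ ^ 2) (C * (1 - ‖w‖ ^ 2)⁻¹) :=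
    hterm ▸ (hasSum_geometric_of_lt_one (sq_nonneg ‖w‖) hw2).mul_left C
  have hhead : ∑ n ∈ range (m + 1), ‖geomWindowSum w m n‖ ^ 2
      = ∑ n ∈ range (m + 1), ‖∑ j ∈ range (n + 1), w ^ j‖ ^ 2 :=
    sum_congr rfl fun n hn => by rw [geomWindowSum_of_le (Nat.lt_succ_iff.mp (mem_range.mp hn))]
  refine (hasSum_nat_add_iff' (m + 1)).mp ?_
  rw [← hhead, add_sub_cancel_left]
  rwa [show ‖w‖ ^ 2 / (1 - ‖w‖ ^ 2) * ‖∑ j ∈ range (m + 1), w ^ j‖ ^ 2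
    = C * (1 - ‖w‖ ^ 2)⁻¹ by rw [hC]; ring]

lemma tendsto_norm_sq_geom_partial_sum {w : ℂ} (hw : ‖w‖ < 1) :
    Tendsto (fun n => ‖∑ j ∈ range n, w ^ j‖ ^ 2) atTop (𝓝 (‖1 - w‖ ^ 2)⁻¹) := by
  simpa [norm_inv, inv_pow] using
    ((hasSum_geometric_of_norm_lt_one hw).tendsto_sum_nat.norm).pow 2

lemma tendsto_tsum_norm_sq_geomWindowSum_div {w : ℂ} (hw : ‖w‖ < 1) :
    Tendsto (fun m : ℕ => (∑' n, ‖geomWindowSum w m n‖ ^ 2) / (m + 1)) atTop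
      (𝓝 (‖1 - w‖ ^ 2)⁻¹) := by
  have hS := tendsto_norm_sq_geom_partial_sum hw
  have hsucc : Tendsto (fun m : ℕ => m + 1) atTop atTop := tendsto_add_atTop_nat 1
  have hmean : Tendsto (fun m : ℕ => ((m + 1 : ℕ) : ℝ)⁻¹ *
      ∑ n ∈ range (m + 1), ‖∑ j ∈ range (n + 1), w ^ j‖ ^ 2) atTop (𝓝 (‖1 - w‖ ^ 2)⁻¹) :=
    (hS.comp hsucc).cesaro.comp hsucc
  have hinv : Tendsto (fun m : ℕ => ((m + 1 : ℕ) : ℝ)⁻¹) atTop (𝓝 0) :=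
    tendsto_inv_atTop_zero.comp (tendsto_natCast_atTop_atTop.comp hsucc)
  have hboundary := ((hS.comp hsucc).mul hinv).const_mul (‖w‖ ^ 2 / (1 - ‖w‖ ^ 2))
  rw [mul_zero, mul_zero] at hboundary
  convert hmean.add hboundary using 2 with m
  · rw [(hasSum_norm_sq_geomWindowSum hw m).tsum_eq]
    simp only [Function.comp_apply]
    push_cast
    ring
  · rw [add_zero]

lemma vonNeumannInvC_eq_zero {β : ℝ} {g : ℤ → ℂ} {t : ℤ} (hg : ∀ s, t ≤ s → g s = 0) :
    vonNeumannInvC β g t = 0 := by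
  simp [vonNeumannInvC, hg]

lemma vonNeumannInvC_waveWindow_sub (β ν : ℝ) (T n : ℕ) :
    vonNeumannInvC β (waveWindow ν T) (T - n)
      = exp (2 * Real.pi * I * ν * (T - n : ℤ))
        * geomWindowSum (β * exp (2 * Real.pi * I * ν)) (2 * T) n / Real.sqrt (2 * T + 1) := by
  rw [vonNeumannInvC, tsum_eq_sum (s := Ico (n - 2 * T) (n + 1)), geomWindowSum, mul_sum,
    sum_div]
  · refine sum_congr rfl fun j hj => ?_
    rw [mem_Ico] at hj
    rw [waveWindow, if_pos (by omega), mul_pow, ← exp_nat_mul]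
    rw [show 2 * Real.pi * I * ν * ((T - n + j : ℤ) : ℂ)
      = 2 * Real.pi * I * ν * (T - n : ℤ) + j * (2 * Real.pi * I * ν) by push_cast; ring, exp_add]
    ring
  · intro j hj
    rw [mem_Ico] at hj
    rw [waveWindow, if_neg (by omega), mul_zero]

lemma norm_sq_vonNeumannInvC_waveWindow_sub (β ν : ℝ) (T n : ℕ) :
    ‖vonNeumannInvC β (waveWindow ν T) (T - n)‖ ^ 2
      = ‖geomWindowSum (β * exp (2 * Real.pi * I * ν)) (2 * T) n‖ ^ 2 / (2 * T + 1) := by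
  rw [vonNeumannInvC_waveWindow_sub, norm_div, norm_mul, norm_real, Real.norm_of_nonneg
    (Real.sqrt_nonneg _), div_pow, Real.sq_sqrt (by positivity),
    show 2 * Real.pi * I * ν * ((T - n : ℤ) : ℂ) = 2 * Real.pi * I * ((ν * (T - n : ℤ) : ℝ) : ℂ)
      by push_cast; ring, norm_exp_two_pi_I_mul, one_mul]

lemma hasSum_norm_sq_vonNeumannInvC_waveWindow (β ν : ℝ) (T : ℕ) (hβ : |β| < 1) :
    HasSum (fun t => ‖vonNeumannInvC β (waveWindow ν T) t‖ ^ 2)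
      ((∑' n, ‖geomWindowSum (β * exp (2 * Real.pi * I * ν)) (2 * T) n‖ ^ 2) / (2 * T + 1)) := by
  refine hasSum_int_of_hasSum_nat_sub (a := T) (fun t ht => ?_) ?_
  · rw [vonNeumannInvC_eq_zero fun s hs => ?_, norm_zero, sq, zero_mul]
    rw [waveWindow, if_neg (by omega)]
  · simp_rw [norm_sq_vonNeumannInvC_waveWindow_sub]
    have hw := (norm_ofReal_mul_exp_two_pi_I_mul β ν).trans_lt hβ
    exact (hasSum_norm_sq_geomWindowSum hw _).summable.hasSum.div_const _

/-- For `|β| < 1` and `z_ν = e^{2πiν}`, the complex `l²` inner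
product (anti-linear in its first argument) satisfies
`⟨(I - βS)⁻¹ g_{ν,T}, (I - βS)⁻¹ g_{ν,T}⟩ → |1 - β z_ν|⁻²` as `T → ∞`. -/
theorem stmt_15 (β : ℝ) (hβ : |β| < 1) (ν : ℝ) :
    Tendsto (fun T : ℕ =>
        ∑' t : ℤ, (starRingEnd ℂ) (vonNeumannInvC β (waveWindow ν T) t)
          * vonNeumannInvC β (waveWindow ν T) t)
      atTop (nhds (((‖(1 : ℂ) - (β : ℂ) * Complex.exp (2 * Real.pi * Complex.I * (ν : ℂ))‖ ^ 2)⁻¹ : ℝ) : ℂ)) := by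
  have hw := (norm_ofReal_mul_exp_two_pi_I_mul β ν).trans_lt hβ
  have hlim := (tendsto_tsum_norm_sq_geomWindowSum_div hw).comp
    (tendsto_id.const_mul_atTop' two_pos)
  refine ((continuous_ofReal.tendsto _).comp hlim).congr fun T => ?_
  simp_rw [conj_mul', ← ofReal_pow, ← ofReal_tsum,
    (hasSum_norm_sq_vonNeumannInvC_waveWindow β ν T hβ).tsum_eq]
  simp
end

section
/- Let β, γ be real numbers with |β| < 1, let S be the shift operator on l²(ℤ, ℂ), and for ν ∈ ℝ, T ∈ ℕ let g_{ν,T}(t) = e^{2πiνt}/√(2T+1) for −T ≤ t ≤ T and 0 otherwise, and z_ν := e^{2πiν}. Then lim_{T→∞} ⟨γ S (I − βS)^{−2} g_{ν,T}, γ S (I − βS)^{−2} g_{ν,T}⟩ = |γ z_ν (1 − β z_ν)^{−2}|² = γ² |1 − β z_ν|^{−4}, where ⟨·,·⟩ is the complex l² inner product. -/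
open Filter

/-- `γ S (I - βS)⁻² g`, where `S` is the shift and `(I - βS)⁻²` the square of the
von Neumann inverse. -/
noncomputable def shiftedInvSq (β γ : ℝ) (g : ℤ → ℂ) : ℤ → ℂ :=
  fun t => (γ : ℂ) * vonNeumannInvC β (vonNeumannInvC β g) (t + 1)

/-! With `w = β e^{2πiν}`, the operator `(I - βS)⁻²` acts on `g_{ν,T}` as convolution with the
kernel `(m + 1) β^m`, so at `t = T - n` it equals `e^{2πiνt} (s_{n+1} - s_{n-2T}) / √(2T+1)`, where
`s_k = ∑_{m<k} (m + 1) w^m` are the partial sums of `(1 - w)⁻²` and `n - 2T` is truncated at `0`.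
Its squared `l²` norm is thus the average of `‖s_{n+1} - s_{n-2T}‖²` over `2T + 1` indices. The
window `n ≤ 2T` contributes a Cesàro mean of `‖s_{n+1}‖²`, which tends to `|1 - w|⁻⁴`; the
remaining terms are bounded independently of `T` because `‖s_k - (1 - w)⁻²‖` decays
geometrically, so they vanish in the mean.
-/

open Finset Topology

theorem tsum_tsum_eq_tsum_sum_antidiagonal {E : Type*} [NormedAddCommGroup E] [CompleteSpace E]
    {f : ℕ × ℕ → E} (hf : Summable f) :
    ∑' (k : ℕ) (j : ℕ), f (k, j) = ∑' n : ℕ, ∑ p ∈ antidiagonal n, f p := by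
  let e := HasAntidiagonal.sigmaAntidiagonalEquivProd (A := ℕ)
  calc ∑' (k : ℕ) (j : ℕ), f (k, j) = ∑' p, f p := hf.tsum_prod.symm
    _ = ∑' x, f (e x) := (e.tsum_eq f).symm
    _ = ∑' (n : ℕ) (p : antidiagonal n), f p := (e.summable_iff.2 hf).tsum_sigma
    _ = ∑' n : ℕ, ∑ p ∈ antidiagonal n, f p := tsum_congr fun n => Finset.tsum_subtype _ _

theorem vonNeumannInvC_vonNeumannInvC {β : ℝ} (hβ : |β| < 1) {g : ℤ → ℂ} {C : ℝ}
    (hg : ∀ s, ‖g s‖ ≤ C) (t : ℤ) :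
    vonNeumannInvC β (vonNeumannInvC β g) t
      = ∑' m : ℕ, ((m : ℂ) + 1) * (β : ℂ) ^ m * g (t + m) := by
  have hgeom : Summable fun k : ℕ => |β| ^ k := summable_geometric_of_lt_one (abs_nonneg β) hβ
  have hsum : Summable fun p : ℕ × ℕ => (β : ℂ) ^ p.1 * ((β : ℂ) ^ p.2 * g (t + p.1 + p.2)) := by
    refine Summable.of_norm_bounded (((hgeom.mul_of_nonneg hgeom (fun _ => by positivity)
      (fun _ => by positivity))).mul_left C) fun p => ?_
    rw [norm_mul, norm_mul, norm_pow, norm_pow, Complex.norm_real, Real.norm_eq_abs, ← mul_assoc,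
      mul_comm C]
    gcongr
    exact hg _
  calc vonNeumannInvC β (vonNeumannInvC β g) t
      = ∑' (k : ℕ) (j : ℕ), (β : ℂ) ^ k * ((β : ℂ) ^ j * g (t + k + j)) :=
        tsum_congr fun k => tsum_mul_left.symm
    _ = ∑' n : ℕ, ∑ p ∈ antidiagonal n, (β : ℂ) ^ p.1 * ((β : ℂ) ^ p.2 * g (t + p.1 + p.2)) :=
        tsum_tsum_eq_tsum_sum_antidiagonal hsum
    _ = _ := by
        refine tsum_congr fun n => ?_
        have hterm : ∀ p ∈ antidiagonal n,
            (β : ℂ) ^ p.1 * ((β : ℂ) ^ p.2 * g (t + p.1 + p.2)) = (β : ℂ) ^ n * g (t + n) := by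
          rintro ⟨i, j⟩ hp
          rw [HasAntidiagonal.mem_antidiagonal] at hp
          subst hp
          rw [← mul_assoc, ← pow_add, add_assoc]
          push_cast
          rfl
        rw [sum_congr rfl hterm, sum_const, Nat.card_antidiagonal, nsmul_eq_mul]
        push_cast
        ring

theorem one_sub_sq_mul_sum_range_succ_mul_pow {R : Type*} [CommRing R] (w : R) (k : ℕ) :
    (1 - w) ^ 2 * ∑ m ∈ range k, ((m : R) + 1) * w ^ m = 1 - (k + 1) * w ^ k + k * w ^ (k + 1) := by
  induction k with
  | zero => simp
  | succ k ih =>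
    rw [sum_range_succ, mul_add, ih]
    push_cast
    ring

theorem summable_succ_sq_mul_geometric {q : ℝ} (hq₀ : 0 ≤ q) (hq : q < 1) :
    Summable fun k : ℕ => ((k : ℝ) + 1) ^ 2 * q ^ k := by
  have hq' : ‖q‖ < 1 := by rwa [Real.norm_eq_abs, abs_of_nonneg hq₀]
  refine (((summable_pow_mul_geometric_of_norm_lt_one 2 hq').add
    ((summable_pow_mul_geometric_of_norm_lt_one 1 hq').mul_left 2)).add
    (summable_geometric_of_lt_one hq₀ hq)).congr fun k => ?_
  ring

theorem summable_norm_sum_range_succ_mul_pow_sub_sq {𝕜 : Type*} [NormedField 𝕜] {w : 𝕜}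
    (hw : ‖w‖ < 1) :
    Summable fun k : ℕ => ‖∑ m ∈ range k, ((m : 𝕜) + 1) * w ^ m - ((1 - w) ^ 2)⁻¹‖ ^ 2 := by
  have hw₁ : (1 - w) ^ 2 ≠ 0 := pow_ne_zero 2 (sub_ne_zero.2 fun h => by simp [← h] at hw)
  set c := ‖(1 - w) ^ 2‖⁻¹
  have hbound : ∀ k : ℕ, ‖∑ m ∈ range k, ((m : 𝕜) + 1) * w ^ m - ((1 - w) ^ 2)⁻¹‖
      ≤ 2 * c * ((k : ℝ) + 1) * ‖w‖ ^ k := by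
    intro k
    have hclosed : ∑ m ∈ range k, ((m : 𝕜) + 1) * w ^ m - ((1 - w) ^ 2)⁻¹
        = (k * w ^ (k + 1) - (k + 1) * w ^ k) * ((1 - w) ^ 2)⁻¹ := by
      rw [eq_mul_inv_iff_mul_eq₀ hw₁, sub_mul, inv_mul_cancel₀ hw₁, mul_comm,
        one_sub_sq_mul_sum_range_succ_mul_pow]
      ring
    have hk : ‖(k : 𝕜)‖ ≤ k := by simpa using Nat.norm_cast_le (α := 𝕜) k
    have hk₁ : ‖(k : 𝕜) + 1‖ ≤ k + 1 := by simpa using Nat.norm_cast_le (α := 𝕜) (k + 1)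
    have hr : (k : ℝ) * ‖w‖ ^ (k + 1) ≤ (k + 1) * ‖w‖ ^ k :=
      mul_le_mul (by linarith) (pow_le_pow_of_le_one (norm_nonneg w) hw.le k.le_succ)
        (by positivity) (by positivity)
    rw [hclosed]
    calc ‖(k * w ^ (k + 1) - (k + 1) * w ^ k) * ((1 - w) ^ 2)⁻¹‖
        ≤ (k * ‖w‖ ^ (k + 1) + (k + 1) * ‖w‖ ^ k) * c := by
          rw [norm_mul, norm_inv]
          gcongr
          refine (norm_sub_le _ _).trans (add_le_add ?_ ?_) <;> rw [norm_mul, norm_pow] <;> gcongr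
      _ ≤ ((k + 1) * ‖w‖ ^ k + (k + 1) * ‖w‖ ^ k) * c := by gcongr
      _ = 2 * c * ((k : ℝ) + 1) * ‖w‖ ^ k := by ring
  have hgeom : Summable fun k : ℕ => ((k : ℝ) + 1) ^ 2 * (‖w‖ ^ 2) ^ k :=
    summable_succ_sq_mul_geometric (by positivity) (by nlinarith [norm_nonneg w])
  refine .of_nonneg_of_le (fun _ => by positivity)
    (fun k => pow_le_pow_left₀ (norm_nonneg _) (hbound k) 2)
    ((hgeom.mul_left ((2 * c) ^ 2)).congr fun k => by ring)

theorem norm_sub_sq_le_two_mul {E : Type*} [SeminormedAddCommGroup E] (x y a : E) :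
    ‖x - y‖ ^ 2 ≤ 2 * (‖x - a‖ ^ 2 + ‖y - a‖ ^ 2) := by
  have h : ‖x - y‖ ≤ ‖x - a‖ + ‖y - a‖ := by
    simpa only [norm_sub_rev a y] using norm_sub_le_norm_sub_add_norm_sub x a y
  exact (pow_le_pow_left₀ (norm_nonneg _) h 2).trans add_sq_le

-- `n - L` is truncated subtraction: since `s 0 = 0`, the terms with `n ≤ L` are `‖s (n + 1)‖ ^ 2`.
theorem tendsto_tsum_norm_sub_sq_div {E : Type*} [SeminormedAddCommGroup E] {s : ℕ → E} {A : E}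
    (h₀ : s 0 = 0) (hs : Summable fun k => ‖s k - A‖ ^ 2) :
    Tendsto (fun L : ℕ => (∑' n : ℕ, ‖s (n + 1) - s (n - L)‖ ^ 2) / (L + 1)) atTop
      (𝓝 (‖A‖ ^ 2)) := by
  have hshift : ∀ j, Summable fun k => ‖s (k + j) - A‖ ^ 2 :=
    fun j => (summable_nat_add_iff j).2 hs
  have hshift_le : ∀ j, ∑' k, ‖s (k + j) - A‖ ^ 2 ≤ ∑' k, ‖s k - A‖ ^ 2 := fun j =>
    tsum_comp_le_tsum_of_inj hs (fun _ => by positivity) (add_left_injective j)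
  have htail_le : ∀ L : ℕ, ∀ k,
      ‖s (k + (L + 1) + 1) - s (k + (L + 1) - L)‖ ^ 2
        ≤ 2 * (‖s (k + (L + 2)) - A‖ ^ 2 + ‖s (k + 1) - A‖ ^ 2) := fun L k => by
    rw [show k + (L + 1) - L = k + 1 by omega, add_assoc]
    exact norm_sub_sq_le_two_mul _ _ _
  have htail_summable : ∀ L : ℕ,
      Summable fun k => ‖s (k + (L + 1) + 1) - s (k + (L + 1) - L)‖ ^ 2 :=
    fun L => .of_nonneg_of_le (fun _ => by positivity) (htail_le L)
      (((hshift _).add (hshift 1)).mul_left 2)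
  have htail_bound : ∀ L : ℕ,
      ∑' k, ‖s (k + (L + 1) + 1) - s (k + (L + 1) - L)‖ ^ 2 ≤ 4 * ∑' k, ‖s k - A‖ ^ 2 := fun L =>
    calc _ ≤ ∑' k, 2 * (‖s (k + (L + 2)) - A‖ ^ 2 + ‖s (k + 1) - A‖ ^ 2) :=
          (htail_summable L).tsum_le_tsum (htail_le L) (((hshift _).add (hshift 1)).mul_left 2)
      _ = 2 * (∑' k, ‖s (k + (L + 2)) - A‖ ^ 2 + ∑' k, ‖s (k + 1) - A‖ ^ 2) := by
          rw [tsum_mul_left, (hshift _).tsum_add (hshift 1)]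
      _ ≤ 4 * ∑' k, ‖s k - A‖ ^ 2 := by linarith [hshift_le (L + 2), hshift_le 1]
  have hsplit : ∀ L : ℕ, ∑' n : ℕ, ‖s (n + 1) - s (n - L)‖ ^ 2
      = ∑ n ∈ range (L + 1), ‖s (n + 1)‖ ^ 2
        + ∑' k, ‖s (k + (L + 1) + 1) - s (k + (L + 1) - L)‖ ^ 2 := fun L => by
    have hsum : Summable fun n : ℕ => ‖s (n + 1) - s (n - L)‖ ^ 2 :=
      (summable_nat_add_iff (f := fun n : ℕ => ‖s (n + 1) - s (n - L)‖ ^ 2) (L + 1)).1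
        (htail_summable L)
    rw [← hsum.sum_add_tsum_nat_add (L + 1)]
    congr 1
    refine sum_congr rfl fun n hn => ?_
    rw [Nat.sub_eq_zero_of_le (Nat.lt_succ_iff.1 (mem_range.1 hn)), h₀, sub_zero]
  have hlim : Tendsto s atTop (𝓝 A) := by
    rw [tendsto_iff_norm_sub_tendsto_zero]
    simpa [Real.sqrt_sq (norm_nonneg _)] using hs.tendsto_atTop_zero.sqrt
  have hcesaro : Tendsto (fun L : ℕ => (∑ n ∈ range (L + 1), ‖s (n + 1)‖ ^ 2) / (L + 1)) atTop
      (𝓝 (‖A‖ ^ 2)) := by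
    refine (((hlim.comp (tendsto_add_atTop_nat 1)).norm.pow 2).cesaro.comp
      (tendsto_add_atTop_nat 1)).congr fun L => ?_
    simp [div_eq_inv_mul]
  have htail : Tendsto (fun L : ℕ =>
      (∑' k, ‖s (k + (L + 1) + 1) - s (k + (L + 1) - L)‖ ^ 2) / (L + 1)) atTop (𝓝 0) :=
    squeeze_zero (fun L => by positivity)
      (fun L => div_le_div_of_nonneg_right (htail_bound L) (by positivity))
      (tendsto_const_nhds.div_atTop
        (tendsto_atTop_add_const_right _ 1 tendsto_natCast_atTop_atTop))
  rw [← add_zero (‖A‖ ^ 2)]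
  exact (hcesaro.add htail).congr fun L => by rw [hsplit, add_div]

noncomputable def expFreq (ν : ℝ) : ℂ := Complex.exp (2 * Real.pi * Complex.I * ν)

theorem norm_expFreq (ν : ℝ) : ‖expFreq ν‖ = 1 := by
  rw [expFreq, show 2 * Real.pi * Complex.I * ν = ((2 * Real.pi * ν : ℝ) : ℂ) * Complex.I by
    push_cast; ring]
  exact Complex.norm_exp_ofReal_mul_I _

theorem waveWindow_of_mem {ν : ℝ} {T : ℕ} {t : ℤ} (ht : -(T : ℤ) ≤ t ∧ t ≤ T) :
    waveWindow ν T t = expFreq ν ^ t / (Real.sqrt (2 * T + 1) : ℂ) := by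
  rw [waveWindow, if_pos ht, expFreq, ← Complex.exp_int_mul]
  ring_nf

theorem waveWindow_of_not_mem {ν : ℝ} {T : ℕ} {t : ℤ} (ht : ¬(-(T : ℤ) ≤ t ∧ t ≤ T)) :
    waveWindow ν T t = 0 :=
  if_neg ht

theorem norm_waveWindow_le_one (ν : ℝ) (T : ℕ) (t : ℤ) : ‖waveWindow ν T t‖ ≤ 1 := by
  by_cases ht : -(T : ℤ) ≤ t ∧ t ≤ T
  · rw [waveWindow_of_mem ht, norm_div, norm_zpow, norm_expFreq, one_zpow, Complex.norm_real,
      Real.norm_of_nonneg (Real.sqrt_nonneg _)]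
    exact div_le_one_of_le₀ (Real.one_le_sqrt.2 (by linarith [T.cast_nonneg (α := ℝ)]))
      (Real.sqrt_nonneg _)
  · simp [waveWindow_of_not_mem ht]

theorem tsum_mul_waveWindow_of_lt (c : ℕ → ℂ) {ν : ℝ} {T : ℕ} {t : ℤ} (ht : (T : ℤ) < t) :
    ∑' m : ℕ, c m * waveWindow ν T (t + m) = 0 := by
  refine (tsum_congr fun m => ?_).trans tsum_zero
  rw [waveWindow_of_not_mem (by omega), mul_zero]

theorem tsum_mul_waveWindow (c : ℕ → ℂ) (ν : ℝ) (T n : ℕ) :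
    ∑' m : ℕ, c m * waveWindow ν T ((T : ℤ) - n + m)
      = expFreq ν ^ ((T : ℤ) - n) / (Real.sqrt (2 * T + 1) : ℂ)
        * ∑ m ∈ Ico (n - 2 * T) (n + 1), c m * expFreq ν ^ m := by
  have hz : expFreq ν ≠ 0 := Complex.exp_ne_zero _
  rw [tsum_eq_sum (s := Ico (n - 2 * T) (n + 1)) fun m hm => by
    rw [waveWindow_of_not_mem (by simp only [mem_Ico] at hm; omega), mul_zero], mul_sum]
  refine sum_congr rfl fun m hm => ?_
  rw [waveWindow_of_mem (by simp only [mem_Ico] at hm; omega), zpow_add₀ hz, zpow_natCast]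
  ring

section Window

variable {β : ℝ} (ν : ℝ) (T : ℕ)

local notation "s" k => ∑ m ∈ range k, ((m : ℂ) + 1) * ((β : ℂ) * expFreq ν) ^ m

theorem vonNeumannInvC_sq_waveWindow (hβ : |β| < 1) (n : ℕ) :
    vonNeumannInvC β (vonNeumannInvC β (waveWindow ν T)) ((T : ℤ) - n)
      = expFreq ν ^ ((T : ℤ) - n) / (Real.sqrt (2 * T + 1) : ℂ)
        * ((s (n + 1)) - s (n - 2 * T)) := by
  rw [vonNeumannInvC_vonNeumannInvC hβ (norm_waveWindow_le_one ν T), tsum_mul_waveWindow,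
    ← sum_Ico_eq_sub _ (by omega)]
  simp only [mul_pow, mul_assoc]

theorem vonNeumannInvC_sq_waveWindow_of_lt (hβ : |β| < 1) {t : ℤ} (ht : (T : ℤ) < t) :
    vonNeumannInvC β (vonNeumannInvC β (waveWindow ν T)) t = 0 := by
  rw [vonNeumannInvC_vonNeumannInvC hβ (norm_waveWindow_le_one ν T), tsum_mul_waveWindow_of_lt _ ht]

theorem tsum_norm_vonNeumannInvC_sq_waveWindow_sq (hβ : |β| < 1) :
    ∑' t : ℤ, ‖vonNeumannInvC β (vonNeumannInvC β (waveWindow ν T)) t‖ ^ 2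
      = (∑' n : ℕ, ‖(s (n + 1)) - s (n - 2 * T)‖ ^ 2) / (2 * T + 1) := by
  have hinj : Function.Injective fun n : ℕ => (T : ℤ) - n := fun a b h => by simpa using h
  have hsupp :
      Function.support (fun t => ‖vonNeumannInvC β (vonNeumannInvC β (waveWindow ν T)) t‖ ^ 2)
        ⊆ Set.range fun n : ℕ => (T : ℤ) - n := fun t ht => by
    have htT : t ≤ T := not_lt.1 fun hlt =>
      ht (by simp [vonNeumannInvC_sq_waveWindow_of_lt ν T hβ hlt])
    exact ⟨((T : ℤ) - t).toNat, by simp only; omega⟩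
  rw [← hinj.tsum_eq hsupp, ← tsum_div_const]
  refine tsum_congr fun n => ?_
  rw [vonNeumannInvC_sq_waveWindow ν T hβ, norm_mul, norm_div, norm_zpow, norm_expFreq, one_zpow,
    Complex.norm_real, Real.norm_of_nonneg (Real.sqrt_nonneg _), mul_pow, div_pow,
    Real.sq_sqrt (by positivity)]
  ring

end Window

theorem tsum_conj_mul_shiftedInvSq (β γ : ℝ) (g : ℤ → ℂ) :
    ∑' t : ℤ, (starRingEnd ℂ) (shiftedInvSq β γ g t) * shiftedInvSq β γ g t
      = ((γ ^ 2 * ∑' t : ℤ, ‖vonNeumannInvC β (vonNeumannInvC β g) t‖ ^ 2 : ℝ) : ℂ) := by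
  set h := vonNeumannInvC β (vonNeumannInvC β g)
  calc _ = ∑' t : ℤ, ((γ ^ 2 * ‖h (t + 1)‖ ^ 2 : ℝ) : ℂ) := tsum_congr fun t => by
        rw [Complex.conj_mul', shiftedInvSq, norm_mul, Complex.norm_real, Real.norm_eq_abs,
          ← Complex.ofReal_pow, mul_pow, sq_abs]
    _ = _ := by
        rw [← Complex.ofReal_tsum, tsum_mul_left,
          ← (Equiv.addRight (1 : ℤ)).tsum_eq fun t => ‖h t‖ ^ 2]
        rfl

/-- For `|β| < 1` and `z_ν = e^{2πiν}`, the complex `l²` inner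
product satisfies
`⟨γ S (I - βS)⁻² g_{ν,T}, γ S (I - βS)⁻² g_{ν,T}⟩ → |γ z_ν (1 - β z_ν)⁻²|² = γ² |1 - β z_ν|⁻⁴`
as `T → ∞`. -/
theorem stmt_17 (β γ : ℝ) (hβ : |β| < 1) (ν : ℝ) :
    Tendsto (fun T : ℕ =>
        ∑' t : ℤ, (starRingEnd ℂ) (shiftedInvSq β γ (waveWindow ν T) t)
          * shiftedInvSq β γ (waveWindow ν T) t)
      atTop (nhds ((γ ^ 2 *
        (‖(1 : ℂ) - (β : ℂ) * Complex.exp (2 * Real.pi * Complex.I * (ν : ℂ))‖ ^ 4)⁻¹ : ℝ) : ℂ)) := by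
  set w : ℂ := β * expFreq ν
  have hw : ‖w‖ < 1 := by rwa [norm_mul, norm_expFreq, mul_one, Complex.norm_real]
  have hlimit := (tendsto_tsum_norm_sub_sq_div (s := fun k => ∑ m ∈ range k, ((m : ℂ) + 1) * w ^ m)
    (by simp) (summable_norm_sum_range_succ_mul_pow_sub_sq hw)).comp
      (tendsto_id.const_mul_atTop' two_pos : Tendsto (fun T : ℕ => 2 * T) atTop atTop)
  have hA : ‖((1 - w) ^ 2)⁻¹‖ ^ 2
      = (‖(1 : ℂ) - (β : ℂ) * Complex.exp (2 * Real.pi * Complex.I * (ν : ℂ))‖ ^ 4)⁻¹ := by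
    rw [norm_inv, norm_pow, inv_pow, ← pow_mul]
    rfl
  rw [hA] at hlimit
  refine ((Complex.continuous_ofReal.tendsto _).comp (hlimit.const_mul (γ ^ 2))).congr fun T => ?_
  simp only [Function.comp_apply, tsum_conj_mul_shiftedInvSq,
    tsum_norm_vonNeumannInvC_sq_waveWindow_sq ν T hβ, Nat.cast_mul, Nat.cast_ofNat, w]
end
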